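/- For every integer n ≥ 1, the total number of V subgraphs in the triangular grid of side n equals 3(n-1)^2; specifically, it is 3·T_{n-2} + 3·T_{n-1} = 3(n-1)^2, where T_k = k(k+1)/2 for k ≥ 0 and T_k = 0 for k < 0. -/
import Mathlib


open Finset

/-- The three edges of the upward unit triangle with lower-left corner `p`. -/
def upTri (p : ℕ × ℕ) : Finset (Sym2 (ℕ × ℕ)) :=
  {s(p, (p.1 + 1, p.2)), s(p, (p.1, p.2 + 1)), s((p.1 + 1, p.2), (p.1, p.2 + 1))}

/-- The three edges of the downward unit triangle associated to `p`. -/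
def downTri (p : ℕ × ℕ) : Finset (Sym2 (ℕ × ℕ)) :=
  {s((p.1 + 1, p.2), (p.1, p.2 + 1)), s((p.1 + 1, p.2), (p.1 + 1, p.2 + 1)),
    s((p.1, p.2 + 1), (p.1 + 1, p.2 + 1))}

/-- The upward-pointing unit triangles of the triangular grid of side `n`. -/
def upTris (n : ℕ) : Finset (Finset (Sym2 (ℕ × ℕ))) :=
  ((Finset.range n ×ˢ Finset.range n).filter (fun p => p.1 + p.2 + 1 ≤ n)).image upTri

/-- The downward-pointing unit triangles of the triangular grid of side `n`. -/
def downTris (n : ℕ) : Finset (Finset (Sym2 (ℕ × ℕ))) :=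
  ((Finset.range n ×ˢ Finset.range n).filter (fun p => p.1 + p.2 + 2 ≤ n)).image downTri

/-- All unit triangles (each given as its set of three edges). -/
def unitTris (n : ℕ) : Finset (Finset (Sym2 (ℕ × ℕ))) := upTris n ∪ downTris n

/-- All edges of the triangular grid of side `n`. -/
def allEdges (n : ℕ) : Finset (Sym2 (ℕ × ℕ)) := (unitTris n).sup id

/-- The internal edges: edges belonging to two unit triangles. -/
def internalEdges (n : ℕ) : Finset (Sym2 (ℕ × ℕ)) :=
  (allEdges n).filter (fun e => 2 ≤ ((unitTris n).filter (fun t => e ∈ t)).card)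

/-- A lozenge tiling: a set of internal edges, no two in a common unit triangle. -/
def IsLozengeTiling (n : ℕ) (S : Finset (Sym2 (ℕ × ℕ))) : Prop :=
  S ⊆ internalEdges n ∧ ∀ t ∈ unitTris n, (t ∩ S).card ≤ 1

/-- `L n l`: the number of lozenge tilings of the side-`n` triangle with `l` lozenges. -/
def L (n l : ℕ) : ℕ :=
  (((internalEdges n).powersetCard l).filter
    (fun S => ∀ t ∈ unitTris n, (t ∩ S).card ≤ 1)).card

/-- `T k = k(k+1)/2` (with `T` vanishing on "negative" arguments via `ℕ` subtraction). -/
def T (k : ℕ) : ℕ := k * (k + 1) / 2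

/-- The V subgraphs: unordered pairs of internal edges lying in a common unit triangle. -/
def Vpairs (n : ℕ) : Finset (Finset (Sym2 (ℕ × ℕ))) :=
  ((internalEdges n).powersetCard 2).filter (fun P => ∃ t ∈ unitTris n, P ⊆ t)

/-! ### Auxiliary definitions and lemmas -/

/-- Horizontal edge. -/
def Hh (i j : ℕ) : Sym2 (ℕ × ℕ) := s((i,j),(i+1,j))
/-- "Vertical" edge. -/
def Vv (i j : ℕ) : Sym2 (ℕ × ℕ) := s((i,j),(i,j+1))
/-- Diagonal edge. -/
def Dd (i j : ℕ) : Sym2 (ℕ × ℕ) := s((i+1,j),(i,j+1))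

lemma upTri_eq (i j : ℕ) : upTri (i,j) = {Hh i j, Vv i j, Dd i j} := rfl
lemma downTri_eq (i j : ℕ) : downTri (i,j) = {Dd i j, Vv (i+1) j, Hh i (j+1)} := rfl

lemma Hh_mem_upTri {i j : ℕ} {p : ℕ × ℕ} : Hh i j ∈ upTri p ↔ p = (i,j) := by
  obtain ⟨a,b⟩ := p
  simp only [upTri, Hh, Vv, Dd, mem_insert, mem_singleton, Sym2.eq_iff, Prod.mk.injEq]
  omega

lemma Vv_mem_upTri {i j : ℕ} {p : ℕ × ℕ} : Vv i j ∈ upTri p ↔ p = (i,j) := by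
  obtain ⟨a,b⟩ := p
  simp only [upTri, Vv, mem_insert, mem_singleton, Sym2.eq_iff, Prod.mk.injEq]
  omega

lemma Dd_mem_upTri {i j : ℕ} {p : ℕ × ℕ} : Dd i j ∈ upTri p ↔ p = (i,j) := by
  obtain ⟨a,b⟩ := p
  simp only [upTri, Dd, mem_insert, mem_singleton, Sym2.eq_iff, Prod.mk.injEq]
  omega

lemma Hh_mem_downTri {i j : ℕ} {p : ℕ × ℕ} : Hh i j ∈ downTri p ↔ p.1 = i ∧ p.2 + 1 = j := by
  obtain ⟨a,b⟩ := p
  simp only [downTri, Hh, mem_insert, mem_singleton, Sym2.eq_iff, Prod.mk.injEq]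
  omega

lemma Vv_mem_downTri {i j : ℕ} {p : ℕ × ℕ} : Vv i j ∈ downTri p ↔ p.1 + 1 = i ∧ p.2 = j := by
  obtain ⟨a,b⟩ := p
  simp only [downTri, Vv, mem_insert, mem_singleton, Sym2.eq_iff, Prod.mk.injEq]
  omega

lemma Dd_mem_downTri {i j : ℕ} {p : ℕ × ℕ} : Dd i j ∈ downTri p ↔ p = (i,j) := by
  obtain ⟨a,b⟩ := p
  simp only [downTri, Dd, mem_insert, mem_singleton, Sym2.eq_iff, Prod.mk.injEq]
  omega

lemma upTri_ne_downTri (p q : ℕ × ℕ) : upTri p ≠ downTri q := by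
  intro h
  have h1 : Hh p.1 p.2 ∈ downTri q := h ▸ (Hh_mem_upTri.mpr rfl)
  have h2 : Vv p.1 p.2 ∈ downTri q := h ▸ (Vv_mem_upTri.mpr rfl)
  rw [Hh_mem_downTri] at h1
  rw [Vv_mem_downTri] at h2
  omega

lemma pair_eq {α : Type*} [DecidableEq α] {a b c d : α} :
    ({a, b} : Finset α) = {c, d} ↔ (a = c ∧ b = d) ∨ (a = d ∧ b = c) := by
  constructor
  · intro h
    have ha : a ∈ ({c,d} : Finset α) := h ▸ mem_insert_self a {b}
    have hb : b ∈ ({c,d} : Finset α) := h ▸ mem_insert_of_mem (mem_singleton_self b)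
    have hc : c ∈ ({a,b} : Finset α) := h.symm ▸ mem_insert_self c {d}
    have hd : d ∈ ({a,b} : Finset α) := h.symm ▸ mem_insert_of_mem (mem_singleton_self d)
    simp only [mem_insert, mem_singleton] at ha hb hc hd
    rcases ha with rfl|rfl <;> rcases hb with rfl|rfl <;> tauto
  · rintro (⟨rfl,rfl⟩|⟨rfl,rfl⟩)
    · rfl
    · exact pair_comm a b

lemma eq_pair_of_subset_triple {α : Type*} [DecidableEq α] {P : Finset α} {a b c : α}
    (hP : P ⊆ {a, b, c}) (h2 : P.card = 2) :
    P = {a, b} ∨ P = {a, c} ∨ P = {b, c} := by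
  obtain ⟨x, y, hxy, rfl⟩ := Finset.card_eq_two.mp h2
  have hx := hP (mem_insert_self x {y})
  have hy := hP (mem_insert_of_mem (mem_singleton_self y))
  simp only [mem_insert, mem_singleton] at hx hy
  rcases hx with rfl|rfl|rfl <;> rcases hy with rfl|rfl|rfl <;>
    first
      | exact absurd rfl hxy
      | (left; rfl)
      | (left; exact pair_comm _ _)
      | (right; left; rfl)
      | (right; left; exact pair_comm _ _)
      | (right; right; rfl)
      | (right; right; exact pair_comm _ _)

lemma mem_unitTris {n : ℕ} {t : Finset (Sym2 (ℕ × ℕ))} :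
    t ∈ unitTris n ↔ (∃ i j, i + j + 1 ≤ n ∧ t = upTri (i,j)) ∨
      (∃ i j, i + j + 2 ≤ n ∧ t = downTri (i,j)) := by
  simp only [unitTris, upTris, downTris, mem_union, mem_image, mem_filter, mem_product,
    mem_range, Prod.exists]
  constructor
  · rintro (⟨i,j,⟨⟨hi,hj⟩,h⟩,rfl⟩|⟨i,j,⟨⟨hi,hj⟩,h⟩,rfl⟩)
    · exact Or.inl ⟨i,j,h,rfl⟩
    · exact Or.inr ⟨i,j,h,rfl⟩
  · rintro (⟨i,j,h,rfl⟩|⟨i,j,h,rfl⟩)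
    · exact Or.inl ⟨i,j,⟨⟨by omega, by omega⟩,h⟩,rfl⟩
    · exact Or.inr ⟨i,j,⟨⟨by omega, by omega⟩,h⟩,rfl⟩

lemma upTri_mem {n i j : ℕ} (h : i + j + 1 ≤ n) : upTri (i,j) ∈ unitTris n :=
  mem_unitTris.mpr (Or.inl ⟨i,j,h,rfl⟩)
lemma downTri_mem {n i j : ℕ} (h : i + j + 2 ≤ n) : downTri (i,j) ∈ unitTris n :=
  mem_unitTris.mpr (Or.inr ⟨i,j,h,rfl⟩)

lemma mem_internal_of_two {n : ℕ} {e : Sym2 (ℕ × ℕ)} {t1 t2 : Finset (Sym2 (ℕ × ℕ))}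
    (h1 : t1 ∈ unitTris n) (h2 : t2 ∈ unitTris n)
    (he1 : e ∈ t1) (he2 : e ∈ t2) (hne : t1 ≠ t2) : e ∈ internalEdges n := by
  rw [internalEdges, mem_filter]
  refine ⟨Finset.mem_sup.mpr ⟨t1, h1, he1⟩, ?_⟩
  have hsub : ({t1, t2} : Finset (Finset (Sym2 (ℕ × ℕ)))) ⊆
      (unitTris n).filter (fun t => e ∈ t) := by
    intro t ht
    simp only [mem_insert, mem_singleton] at ht
    rcases ht with rfl|rfl <;> rw [mem_filter] <;> exact ⟨‹_›, ‹_›⟩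
  calc 2 = ({t1, t2} : Finset (Finset (Sym2 (ℕ × ℕ)))).card := (card_pair hne).symm
    _ ≤ _ := card_le_card hsub

lemma internal_Hh {n i j : ℕ} : Hh i j ∈ internalEdges n ↔ 1 ≤ j ∧ i + j + 1 ≤ n := by
  constructor
  · intro h
    rw [internalEdges, mem_filter] at h
    obtain ⟨t1, ht1, t2, ht2, hne⟩ := Finset.one_lt_card.mp (lt_of_lt_of_le one_lt_two h.2)
    rw [mem_filter] at ht1 ht2
    rcases mem_unitTris.mp ht1.1 with ⟨a,b,hab,rfl⟩|⟨a,b,hab,rfl⟩ <;>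
      rcases mem_unitTris.mp ht2.1 with ⟨c,d,hcd,rfl⟩|⟨c,d,hcd,rfl⟩
    · have e1 := Hh_mem_upTri.mp ht1.2
      have e2 := Hh_mem_upTri.mp ht2.2
      exact absurd (by rw [e1, e2]) hne
    · have e1 := Hh_mem_upTri.mp ht1.2
      have e2 := Hh_mem_downTri.mp ht2.2
      simp only [Prod.mk.injEq] at e1
      omega
    · have e1 := Hh_mem_downTri.mp ht1.2
      have e2 := Hh_mem_upTri.mp ht2.2
      simp only [Prod.mk.injEq] at e2
      omega
    · have e1 := Hh_mem_downTri.mp ht1.2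
      have e2 := Hh_mem_downTri.mp ht2.2
      exact absurd (by rw [show a = c by omega, show b = d by omega]) hne
  · rintro ⟨hj, hn⟩
    refine mem_internal_of_two (upTri_mem (show i + j + 1 ≤ n from hn))
      (downTri_mem (show i + (j-1) + 2 ≤ n by omega)) ?_ ?_ (upTri_ne_downTri _ _)
    · exact Hh_mem_upTri.mpr rfl
    · exact Hh_mem_downTri.mpr (by constructor <;> simp <;> omega)

lemma internal_Vv {n i j : ℕ} : Vv i j ∈ internalEdges n ↔ 1 ≤ i ∧ i + j + 1 ≤ n := by
  constructor
  · intro h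
    rw [internalEdges, mem_filter] at h
    obtain ⟨t1, ht1, t2, ht2, hne⟩ := Finset.one_lt_card.mp (lt_of_lt_of_le one_lt_two h.2)
    rw [mem_filter] at ht1 ht2
    rcases mem_unitTris.mp ht1.1 with ⟨a,b,hab,rfl⟩|⟨a,b,hab,rfl⟩ <;>
      rcases mem_unitTris.mp ht2.1 with ⟨c,d,hcd,rfl⟩|⟨c,d,hcd,rfl⟩
    · have e1 := Vv_mem_upTri.mp ht1.2
      have e2 := Vv_mem_upTri.mp ht2.2
      exact absurd (by rw [e1, e2]) hne
    · have e1 := Vv_mem_upTri.mp ht1.2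
      have e2 := Vv_mem_downTri.mp ht2.2
      simp only [Prod.mk.injEq] at e1
      omega
    · have e1 := Vv_mem_downTri.mp ht1.2
      have e2 := Vv_mem_upTri.mp ht2.2
      simp only [Prod.mk.injEq] at e2
      omega
    · have e1 := Vv_mem_downTri.mp ht1.2
      have e2 := Vv_mem_downTri.mp ht2.2
      exact absurd (by rw [show a = c by omega, show b = d by omega]) hne
  · rintro ⟨hi, hn⟩
    refine mem_internal_of_two (upTri_mem (show i + j + 1 ≤ n from hn))
      (downTri_mem (show (i-1) + j + 2 ≤ n by omega)) ?_ ?_ (upTri_ne_downTri _ _)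
    · exact Vv_mem_upTri.mpr rfl
    · exact Vv_mem_downTri.mpr (by constructor <;> simp <;> omega)

lemma internal_Dd {n i j : ℕ} : Dd i j ∈ internalEdges n ↔ i + j + 2 ≤ n := by
  constructor
  · intro h
    rw [internalEdges, mem_filter] at h
    obtain ⟨t1, ht1, t2, ht2, hne⟩ := Finset.one_lt_card.mp (lt_of_lt_of_le one_lt_two h.2)
    rw [mem_filter] at ht1 ht2
    rcases mem_unitTris.mp ht1.1 with ⟨a,b,hab,rfl⟩|⟨a,b,hab,rfl⟩ <;>
      rcases mem_unitTris.mp ht2.1 with ⟨c,d,hcd,rfl⟩|⟨c,d,hcd,rfl⟩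
    · have e1 := Dd_mem_upTri.mp ht1.2
      have e2 := Dd_mem_upTri.mp ht2.2
      exact absurd (by rw [e1, e2]) hne
    · have e2 := Dd_mem_downTri.mp ht2.2
      simp only [Prod.mk.injEq] at e2
      omega
    · have e1 := Dd_mem_downTri.mp ht1.2
      simp only [Prod.mk.injEq] at e1
      omega
    · have e1 := Dd_mem_downTri.mp ht1.2
      have e2 := Dd_mem_downTri.mp ht2.2
      exact absurd (by rw [e1, e2]) hne
  · intro hn
    refine mem_internal_of_two (upTri_mem (show i + j + 1 ≤ n by omega))
      (downTri_mem (show i + j + 2 ≤ n from hn)) ?_ ?_ (upTri_ne_downTri _ _)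
    · exact Dd_mem_upTri.mpr rfl
    · exact Dd_mem_downTri.mpr rfl

lemma two_T (k : ℕ) : 2 * T k = k * (k + 1) :=
  Nat.mul_div_cancel' ((Nat.even_mul_succ_self k).two_dvd)

/-- The index grid for the six families of V's. -/
def Agrid (m : ℕ) : Finset (ℕ × ℕ) :=
  (range m ×ˢ range m).filter (fun p => p.1 + p.2 + 2 ≤ m)

lemma Agrid_card (m : ℕ) : (Agrid m).card = T (m - 1) := by
  have h1 : Agrid m = (range m).biUnion (fun i => ({i} : Finset ℕ) ×ˢ range (m - 1 - i)) := by
    ext ⟨i, j⟩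
    simp only [Agrid, mem_filter, mem_product, mem_range, mem_biUnion, mem_singleton]
    constructor
    · rintro ⟨⟨hi, hj⟩, h⟩; exact ⟨i, by omega, rfl, by omega⟩
    · rintro ⟨a, ha, rfl, hj⟩; omega
  rw [h1, card_biUnion]
  · have h2 : ∀ i ∈ range m, (({i} : Finset ℕ) ×ˢ range (m - 1 - i)).card = m - 1 - i := by
      intro i _; simp
    rw [Finset.sum_congr rfl h2]
    have h3 : ∑ i ∈ range m, (m - 1 - i) = ∑ i ∈ range m, i := by
      have := Finset.sum_range_reflect (fun j => j) m
      simpa using this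
    rw [h3, Finset.sum_range_id]
    rcases m with _ | k
    · rfl
    · simp only [T, Nat.add_sub_cancel]
      rw [mul_comm]
  · intro i _ j _ hij
    simp only [Finset.disjoint_left, mem_product, mem_singleton]
    rintro ⟨a, b⟩ ⟨rfl, -⟩ ⟨rfl, -⟩
    exact hij rfl

lemma arith_T (n : ℕ) (hn : 1 ≤ n) : 3 * T (n - 2) + 3 * T (n - 1) = 3 * (n - 1) ^ 2 := by
  obtain ⟨m, rfl⟩ := Nat.exists_eq_add_of_le hn
  rcases m with _ | k
  · simp [T]
  · have h1 := two_T k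
    have h2 := two_T (k + 1)
    have key : 2 * (3 * T (1 + (k+1) - 2) + 3 * T (1 + (k+1) - 1)) =
        2 * (3 * (1 + (k+1) - 1) ^ 2) := by
      have e1 : 1 + (k+1) - 2 = k := by omega
      have e2 : 1 + (k+1) - 1 = k + 1 := by omega
      rw [e1, e2]
      calc 2 * (3 * T k + 3 * T (k+1)) = 3 * (2 * T k) + 3 * (2 * T (k+1)) := by ring
        _ = 3 * (k * (k+1)) + 3 * ((k+1) * (k+1+1)) := by rw [h1, h2]
        _ = 2 * (3 * (k+1) ^ 2) := by ring
    exact Nat.eq_of_mul_eq_mul_left (by norm_num) key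

/-- The six families of V's. -/
def g1 (p : ℕ × ℕ) : Finset (Sym2 (ℕ × ℕ)) := {Hh (p.1+1) (p.2+1), Vv (p.1+1) (p.2+1)}
def g2 (p : ℕ × ℕ) : Finset (Sym2 (ℕ × ℕ)) := {Hh p.1 (p.2+1), Dd p.1 (p.2+1)}
def g3 (p : ℕ × ℕ) : Finset (Sym2 (ℕ × ℕ)) := {Vv (p.1+1) p.2, Dd (p.1+1) p.2}
def g4 (p : ℕ × ℕ) : Finset (Sym2 (ℕ × ℕ)) := {Dd p.1 p.2, Vv (p.1+1) p.2}
def g5 (p : ℕ × ℕ) : Finset (Sym2 (ℕ × ℕ)) := {Dd p.1 p.2, Hh p.1 (p.2+1)}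
def g6 (p : ℕ × ℕ) : Finset (Sym2 (ℕ × ℕ)) := {Vv (p.1+1) p.2, Hh p.1 (p.2+1)}

lemma dis_aux {s t : Finset (ℕ × ℕ)} {f g : (ℕ × ℕ) → Finset (Sym2 (ℕ × ℕ))}
    (h : ∀ p q, f p ≠ g q) : Disjoint (s.image f) (t.image g) := by
  rw [Finset.disjoint_left]
  simp only [mem_image]
  rintro P ⟨p, _, rfl⟩ ⟨q, _, hq⟩
  exact h p q hq.symm

lemma mem_Vpairs_iff {n : ℕ} {P : Finset (Sym2 (ℕ × ℕ))} :
    P ∈ Vpairs n ↔ P ⊆ internalEdges n ∧ P.card = 2 ∧ ∃ t ∈ unitTris n, P ⊆ t := by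
  simp only [Vpairs, mem_filter, mem_powersetCard]
  tauto

/-- The total number of V subgraphs equals `3(n-1)² = 3T_{n-2} + 3T_{n-1}`. -/
theorem Vpairs_count (n : ℕ) (hn : 1 ≤ n) :
    (Vpairs n).card = 3 * (n - 1) ^ 2 ∧
    3 * T (n - 2) + 3 * T (n - 1) = 3 * (n - 1) ^ 2 := by
  refine ⟨?_, arith_T n hn⟩
  -- the set-level decomposition
  have hEq : Vpairs n =
      (Agrid (n-1)).image g1 ∪ (Agrid (n-1)).image g2 ∪ (Agrid (n-1)).image g3 ∪
      (Agrid n).image g4 ∪ (Agrid n).image g5 ∪ (Agrid n).image g6 := by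
    ext P
    simp only [mem_union, mem_image]
    constructor
    · intro hP
      obtain ⟨hPsub, hP2, t, ht, hPt⟩ := mem_Vpairs_iff.mp hP
      rcases mem_unitTris.mp ht with ⟨i,j,hb,rfl⟩|⟨i,j,hb,rfl⟩
      · rw [upTri_eq] at hPt
        rcases eq_pair_of_subset_triple hPt hP2 with rfl|rfl|rfl
        · have hH := internal_Hh.mp (hPsub (mem_insert_self _ _))
          have hV := internal_Vv.mp (hPsub (mem_insert_of_mem (mem_singleton_self _)))
          refine Or.inl (Or.inl (Or.inl (Or.inl (Or.inl ⟨(i-1, j-1), ?_, ?_⟩))))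
          · simp only [Agrid, mem_filter, mem_product, mem_range]; omega
          · have e1 : i - 1 + 1 = i := by omega
            have e2 : j - 1 + 1 = j := by omega
            simp [g1, e1, e2]
        · have hH := internal_Hh.mp (hPsub (mem_insert_self _ _))
          have hD := internal_Dd.mp (hPsub (mem_insert_of_mem (mem_singleton_self _)))
          refine Or.inl (Or.inl (Or.inl (Or.inl (Or.inr ⟨(i, j-1), ?_, ?_⟩))))
          · simp only [Agrid, mem_filter, mem_product, mem_range]; omega
          · have e2 : j - 1 + 1 = j := by omega
            simp [g2, e2]
        · have hV := internal_Vv.mp (hPsub (mem_insert_self _ _))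
          have hD := internal_Dd.mp (hPsub (mem_insert_of_mem (mem_singleton_self _)))
          refine Or.inl (Or.inl (Or.inl (Or.inr ⟨(i-1, j), ?_, ?_⟩)))
          · simp only [Agrid, mem_filter, mem_product, mem_range]; omega
          · have e1 : i - 1 + 1 = i := by omega
            simp [g3, e1]
      · rw [downTri_eq] at hPt
        rcases eq_pair_of_subset_triple hPt hP2 with rfl|rfl|rfl
        · refine Or.inl (Or.inl (Or.inr ⟨(i, j), ?_, ?_⟩))
          · simp only [Agrid, mem_filter, mem_product, mem_range]; omega
          · simp [g4]
        · refine Or.inl (Or.inr ⟨(i, j), ?_, ?_⟩)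
          · simp only [Agrid, mem_filter, mem_product, mem_range]; omega
          · simp [g5]
        · refine Or.inr ⟨(i, j), ?_, ?_⟩
          · simp only [Agrid, mem_filter, mem_product, mem_range]; omega
          · simp [g6]
    · rintro (((((⟨⟨a,b⟩,hab,rfl⟩|⟨⟨a,b⟩,hab,rfl⟩)|⟨⟨a,b⟩,hab,rfl⟩)|⟨⟨a,b⟩,hab,rfl⟩)|
        ⟨⟨a,b⟩,hab,rfl⟩)|⟨⟨a,b⟩,hab,rfl⟩) <;>
          simp only [Agrid, mem_filter, mem_product, mem_range] at hab
      · refine mem_Vpairs_iff.mpr ⟨?_, ?_, upTri (a+1, b+1), upTri_mem (by omega), ?_⟩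
        · intro e he
          simp only [g1, mem_insert, mem_singleton] at he
          rcases he with rfl|rfl
          · exact internal_Hh.mpr ⟨by omega, by omega⟩
          · exact internal_Vv.mpr ⟨by omega, by omega⟩
        · refine card_pair ?_
          simp only [Hh, Vv, ne_eq, Sym2.eq_iff, Prod.mk.injEq]
          omega
        · rw [upTri_eq]
          intro e he
          simp only [g1, mem_insert, mem_singleton] at he
          rcases he with rfl|rfl <;> simp
      · refine mem_Vpairs_iff.mpr ⟨?_, ?_, upTri (a, b+1), upTri_mem (by omega), ?_⟩
        · intro e he
          simp only [g2, mem_insert, mem_singleton] at he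
          rcases he with rfl|rfl
          · exact internal_Hh.mpr ⟨by omega, by omega⟩
          · exact internal_Dd.mpr (by omega)
        · refine card_pair ?_
          simp only [Hh, Dd, ne_eq, Sym2.eq_iff, Prod.mk.injEq]
          omega
        · rw [upTri_eq]
          intro e he
          simp only [g2, mem_insert, mem_singleton] at he
          rcases he with rfl|rfl <;> simp
      · refine mem_Vpairs_iff.mpr ⟨?_, ?_, upTri (a+1, b), upTri_mem (by omega), ?_⟩
        · intro e he
          simp only [g3, mem_insert, mem_singleton] at he
          rcases he with rfl|rfl
          · exact internal_Vv.mpr ⟨by omega, by omega⟩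
          · exact internal_Dd.mpr (by omega)
        · refine card_pair ?_
          simp only [Vv, Dd, ne_eq, Sym2.eq_iff, Prod.mk.injEq]
          omega
        · rw [upTri_eq]
          intro e he
          simp only [g3, mem_insert, mem_singleton] at he
          rcases he with rfl|rfl <;> simp
      · refine mem_Vpairs_iff.mpr ⟨?_, ?_, downTri (a, b), downTri_mem (by omega), ?_⟩
        · intro e he
          simp only [g4, mem_insert, mem_singleton] at he
          rcases he with rfl|rfl
          · exact internal_Dd.mpr (by omega)
          · exact internal_Vv.mpr ⟨by omega, by omega⟩
        · refine card_pair ?_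
          simp only [Dd, Vv, ne_eq, Sym2.eq_iff, Prod.mk.injEq]
          omega
        · rw [downTri_eq]
          intro e he
          simp only [g4, mem_insert, mem_singleton] at he
          rcases he with rfl|rfl <;> simp
      · refine mem_Vpairs_iff.mpr ⟨?_, ?_, downTri (a, b), downTri_mem (by omega), ?_⟩
        · intro e he
          simp only [g5, mem_insert, mem_singleton] at he
          rcases he with rfl|rfl
          · exact internal_Dd.mpr (by omega)
          · exact internal_Hh.mpr ⟨by omega, by omega⟩
        · refine card_pair ?_
          simp only [Dd, Hh, ne_eq, Sym2.eq_iff, Prod.mk.injEq]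
          omega
        · rw [downTri_eq]
          intro e he
          simp only [g5, mem_insert, mem_singleton] at he
          rcases he with rfl|rfl <;> simp
      · refine mem_Vpairs_iff.mpr ⟨?_, ?_, downTri (a, b), downTri_mem (by omega), ?_⟩
        · intro e he
          simp only [g6, mem_insert, mem_singleton] at he
          rcases he with rfl|rfl
          · exact internal_Vv.mpr ⟨by omega, by omega⟩
          · exact internal_Hh.mpr ⟨by omega, by omega⟩
        · refine card_pair ?_
          simp only [Vv, Hh, ne_eq, Sym2.eq_iff, Prod.mk.injEq]
          omega
        · rw [downTri_eq]
          intro e he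
          simp only [g6, mem_insert, mem_singleton] at he
          rcases he with rfl|rfl <;> simp
  -- pairwise disjointness
  have d12 : Disjoint ((Agrid (n-1)).image g1) ((Agrid (n-1)).image g2) := by
    apply dis_aux; intro p q h
    simp only [g1, g2, pair_eq, Hh, Vv, Dd, Sym2.eq_iff, Prod.mk.injEq] at h
    all_goals omega
  have d13 : Disjoint ((Agrid (n-1)).image g1) ((Agrid (n-1)).image g3) := by
    apply dis_aux; intro p q h
    simp only [g1, g3, pair_eq, Hh, Vv, Dd, Sym2.eq_iff, Prod.mk.injEq] at h
    all_goals omega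
  have d14 : Disjoint ((Agrid (n-1)).image g1) ((Agrid n).image g4) := by
    apply dis_aux; intro p q h
    simp only [g1, g4, pair_eq, Hh, Vv, Dd, Sym2.eq_iff, Prod.mk.injEq] at h
    all_goals omega
  have d15 : Disjoint ((Agrid (n-1)).image g1) ((Agrid n).image g5) := by
    apply dis_aux; intro p q h
    simp only [g1, g5, pair_eq, Hh, Vv, Dd, Sym2.eq_iff, Prod.mk.injEq] at h
    all_goals omega
  have d16 : Disjoint ((Agrid (n-1)).image g1) ((Agrid n).image g6) := by
    apply dis_aux; intro p q h
    simp only [g1, g6, pair_eq, Hh, Vv, Dd, Sym2.eq_iff, Prod.mk.injEq] at h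
    all_goals omega
  have d23 : Disjoint ((Agrid (n-1)).image g2) ((Agrid (n-1)).image g3) := by
    apply dis_aux; intro p q h
    simp only [g2, g3, pair_eq, Hh, Vv, Dd, Sym2.eq_iff, Prod.mk.injEq] at h
    all_goals omega
  have d24 : Disjoint ((Agrid (n-1)).image g2) ((Agrid n).image g4) := by
    apply dis_aux; intro p q h
    simp only [g2, g4, pair_eq, Hh, Vv, Dd, Sym2.eq_iff, Prod.mk.injEq] at h
    all_goals omega
  have d25 : Disjoint ((Agrid (n-1)).image g2) ((Agrid n).image g5) := by
    apply dis_aux; intro p q h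
    simp only [g2, g5, pair_eq, Hh, Vv, Dd, Sym2.eq_iff, Prod.mk.injEq] at h
    all_goals omega
  have d26 : Disjoint ((Agrid (n-1)).image g2) ((Agrid n).image g6) := by
    apply dis_aux; intro p q h
    simp only [g2, g6, pair_eq, Hh, Vv, Dd, Sym2.eq_iff, Prod.mk.injEq] at h
    all_goals omega
  have d34 : Disjoint ((Agrid (n-1)).image g3) ((Agrid n).image g4) := by
    apply dis_aux; intro p q h
    simp only [g3, g4, pair_eq, Hh, Vv, Dd, Sym2.eq_iff, Prod.mk.injEq] at h
    all_goals omega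
  have d35 : Disjoint ((Agrid (n-1)).image g3) ((Agrid n).image g5) := by
    apply dis_aux; intro p q h
    simp only [g3, g5, pair_eq, Hh, Vv, Dd, Sym2.eq_iff, Prod.mk.injEq] at h
    all_goals omega
  have d36 : Disjoint ((Agrid (n-1)).image g3) ((Agrid n).image g6) := by
    apply dis_aux; intro p q h
    simp only [g3, g6, pair_eq, Hh, Vv, Dd, Sym2.eq_iff, Prod.mk.injEq] at h
    all_goals omega
  have d45 : Disjoint ((Agrid n).image g4) ((Agrid n).image g5) := by
    apply dis_aux; intro p q h
    simp only [g4, g5, pair_eq, Hh, Vv, Dd, Sym2.eq_iff, Prod.mk.injEq] at h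
    all_goals omega
  have d46 : Disjoint ((Agrid n).image g4) ((Agrid n).image g6) := by
    apply dis_aux; intro p q h
    simp only [g4, g6, pair_eq, Hh, Vv, Dd, Sym2.eq_iff, Prod.mk.injEq] at h
    all_goals omega
  have d56 : Disjoint ((Agrid n).image g5) ((Agrid n).image g6) := by
    apply dis_aux; intro p q h
    simp only [g5, g6, pair_eq, Hh, Vv, Dd, Sym2.eq_iff, Prod.mk.injEq] at h
    all_goals omega
  -- injectivity on each family
  have inj1 : Set.InjOn g1 (Agrid (n-1)) := by
    rintro ⟨a,b⟩ - ⟨c,d⟩ - h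
    simp only [g1, pair_eq, Hh, Vv, Dd, Sym2.eq_iff, Prod.mk.injEq] at h
    simp only [Prod.mk.injEq]
    omega
  have inj2 : Set.InjOn g2 (Agrid (n-1)) := by
    rintro ⟨a,b⟩ - ⟨c,d⟩ - h
    simp only [g2, pair_eq, Hh, Vv, Dd, Sym2.eq_iff, Prod.mk.injEq] at h
    simp only [Prod.mk.injEq]
    omega
  have inj3 : Set.InjOn g3 (Agrid (n-1)) := by
    rintro ⟨a,b⟩ - ⟨c,d⟩ - h
    simp only [g3, pair_eq, Hh, Vv, Dd, Sym2.eq_iff, Prod.mk.injEq] at h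
    simp only [Prod.mk.injEq]
    omega
  have inj4 : Set.InjOn g4 (Agrid n) := by
    rintro ⟨a,b⟩ - ⟨c,d⟩ - h
    simp only [g4, pair_eq, Hh, Vv, Dd, Sym2.eq_iff, Prod.mk.injEq] at h
    simp only [Prod.mk.injEq]
    omega
  have inj5 : Set.InjOn g5 (Agrid n) := by
    rintro ⟨a,b⟩ - ⟨c,d⟩ - h
    simp only [g5, pair_eq, Hh, Vv, Dd, Sym2.eq_iff, Prod.mk.injEq] at h
    simp only [Prod.mk.injEq]
    omega
  have inj6 : Set.InjOn g6 (Agrid n) := by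
    rintro ⟨a,b⟩ - ⟨c,d⟩ - h
    simp only [g6, pair_eq, Hh, Vv, Dd, Sym2.eq_iff, Prod.mk.injEq] at h
    simp only [Prod.mk.injEq]
    omega
  -- putting it together
  rw [hEq]
  rw [card_union_of_disjoint (by
    simp only [disjoint_union_left]
    exact ⟨⟨⟨⟨d16, d26⟩, d36⟩, d46⟩, d56⟩)]
  rw [card_union_of_disjoint (by
    simp only [disjoint_union_left]
    exact ⟨⟨⟨d15, d25⟩, d35⟩, d45⟩)]
  rw [card_union_of_disjoint (by
    simp only [disjoint_union_left]
    exact ⟨⟨d14, d24⟩, d34⟩)]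
  rw [card_union_of_disjoint (by
    simp only [disjoint_union_left]
    exact ⟨d13, d23⟩)]
  rw [card_union_of_disjoint d12]
  rw [card_image_of_injOn inj1, card_image_of_injOn inj2, card_image_of_injOn inj3,
    card_image_of_injOn inj4, card_image_of_injOn inj5, card_image_of_injOn inj6]
  rw [Agrid_card, Agrid_card]
  have e : n - 1 - 1 = n - 2 := by omega
  rw [e]
  have h := arith_T n hn
  omega
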